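/- Assume the design does not depend on ω (p(s, ω) = q(s)) and let s₀ be a sample with q(s₀) > 0. Then for all draws k, ℓ with k ≠ ℓ and all a, b ∈ ℝ, the posterior joint distribution of the sample variables satisfies P(Y_{i(k)} ≤ a, Y_{i(ℓ)} ≤ b | s₀) = Σ_{i=1}^N Σ_{j=1}^N P(Y_i ≤ a, Y_j ≤ b)·I_i^k(s₀)·I_j^ℓ(s₀) = P(Y_{s₀(k)} ≤ a, Y_{s₀(ℓ)} ≤ b), where I_i^k(s₀) = 1 if s₀(k) = i and 0 otherwise; similarly P(Y_{i(k)} ≤ a | s₀) = Σ_{i=1}^N P(Y_i ≤ a)·I_i^k(s₀). -/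

import Mathlib

open MeasureTheory ProbabilityTheory

theorem cond_prod_singleton_prod_univ_apply {α β : Type*} [MeasurableSpace α]
    [MeasurableSingletonClass α] [MeasurableSpace β] (μ : Measure α) [SFinite μ]
    (ν : Measure β) [IsProbabilityMeasure ν] {a : α} (ha₀ : μ {a} ≠ 0) (ha : μ {a} ≠ ⊤)
    (T : Set (α × β)) :
    (μ.prod ν)[|{a} ×ˢ Set.univ] T = ν (Prod.mk a ⁻¹' T) := by
  have hsection : {a} ×ˢ Set.univ ∩ T = {a} ×ˢ (Prod.mk a ⁻¹' T) := by
    ext ⟨x, y⟩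
    simp only [Set.mem_inter_iff, Set.mem_prod, Set.mem_singleton_iff, Set.mem_univ,
      and_true, Set.mem_preimage]
    constructor <;> rintro ⟨rfl, h⟩ <;> exact ⟨rfl, h⟩
  rw [cond_apply ((measurableSet_singleton a).prod MeasurableSet.univ), hsection,
    Measure.prod_prod, Measure.prod_prod, measure_univ, mul_one, ← mul_assoc,
    ENNReal.inv_mul_cancel ha₀ ha, one_mul]

theorem statement11_general
    {Ω : Type*} [MeasurableSpace Ω] (P : Measure Ω) [IsProbabilityMeasure P]
    (n N : ℕ)
    (Y : Fin N → Ω → ℝ)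
    (Q : Measure (Fin n → Fin N)) [IsProbabilityMeasure Q]
    (s₀ : Fin n → Fin N) (hq₀ : 0 < Q {s₀})
    (k l : Fin n) (a b : ℝ) :
    (((Q.prod P)[|{s₀} ×ˢ Set.univ])
        {x : (Fin n → Fin N) × Ω | Y (x.1 k) x.2 ≤ a ∧ Y (x.1 l) x.2 ≤ b}
      = ∑ i : Fin N, ∑ j : Fin N,
          P {ω | Y i ω ≤ a ∧ Y j ω ≤ b}
            * (if s₀ k = i then 1 else 0) * (if s₀ l = j then 1 else 0)) ∧
    (((Q.prod P)[|{s₀} ×ˢ Set.univ])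
        {x : (Fin n → Fin N) × Ω | Y (x.1 k) x.2 ≤ a ∧ Y (x.1 l) x.2 ≤ b}
      = P {ω | Y (s₀ k) ω ≤ a ∧ Y (s₀ l) ω ≤ b}) ∧
    (((Q.prod P)[|{s₀} ×ˢ Set.univ]) {x : (Fin n → Fin N) × Ω | Y (x.1 k) x.2 ≤ a}
      = ∑ i : Fin N, P {ω | Y i ω ≤ a} * (if s₀ k = i then 1 else 0)) := by
  have hcond := cond_prod_singleton_prod_univ_apply Q P hq₀.ne' (measure_ne_top Q {s₀})
  have hjoint : (Q.prod P)[{x | Y (x.1 k) x.2 ≤ a ∧ Y (x.1 l) x.2 ≤ b} | {s₀} ×ˢ Set.univ]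
      = P {ω | Y (s₀ k) ω ≤ a ∧ Y (s₀ l) ω ≤ b} :=
    hcond _
  refine ⟨?_, hjoint, ?_⟩
  · simp only [hjoint, mul_ite, mul_one, mul_zero, Finset.sum_ite_eq, Finset.mem_univ, if_true]
  · simp only [hcond, mul_ite, mul_one, mul_zero, Finset.sum_ite_eq, Finset.mem_univ, if_true]
    rfl

/-- With a constant design (`P_{d,m} = q ⊗ P`) and a sample `s₀` with
`q(s₀) > 0`, for all draws `k ≠ ℓ` and all `a, b ∈ ℝ`, the posterior joint distribution of
the sample variables satisfies
`P(Y_{i(k)} ≤ a, Y_{i(ℓ)} ≤ b | s₀) = Σ_i Σ_j P(Y_i ≤ a, Y_j ≤ b)·I_i^k(s₀)·I_j^ℓ(s₀)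
  = P(Y_{s₀(k)} ≤ a, Y_{s₀(ℓ)} ≤ b)`,
and similarly `P(Y_{i(k)} ≤ a | s₀) = Σ_i P(Y_i ≤ a)·I_i^k(s₀)`. -/
theorem statement11
    {Ω : Type*} [MeasurableSpace Ω] (P : Measure Ω) [IsProbabilityMeasure P]
    (n N : ℕ) (hn : 1 ≤ n) (hnN : n ≤ N)
    (Y : Fin N → Ω → ℝ) (hYmeas : ∀ i, Measurable (Y i))
    (Q : Measure (Fin n → Fin N)) [IsProbabilityMeasure Q]
    (s₀ : Fin n → Fin N) (hq₀ : 0 < Q {s₀})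
    (k l : Fin n) (hkl : k ≠ l) (a b : ℝ) :
    (((Q.prod P)[|{s₀} ×ˢ Set.univ])
        {x : (Fin n → Fin N) × Ω | Y (x.1 k) x.2 ≤ a ∧ Y (x.1 l) x.2 ≤ b}
      = ∑ i : Fin N, ∑ j : Fin N,
          P {ω | Y i ω ≤ a ∧ Y j ω ≤ b}
            * (if s₀ k = i then 1 else 0) * (if s₀ l = j then 1 else 0)) ∧
    (((Q.prod P)[|{s₀} ×ˢ Set.univ])
        {x : (Fin n → Fin N) × Ω | Y (x.1 k) x.2 ≤ a ∧ Y (x.1 l) x.2 ≤ b}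
      = P {ω | Y (s₀ k) ω ≤ a ∧ Y (s₀ l) ω ≤ b}) ∧
    (((Q.prod P)[|{s₀} ×ˢ Set.univ]) {x : (Fin n → Fin N) × Ω | Y (x.1 k) x.2 ≤ a}
      = ∑ i : Fin N, P {ω | Y i ω ≤ a} * (if s₀ k = i then 1 else 0)) :=
  statement11_general P n N Y Q s₀ hq₀ k l a b
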